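/- Let X be a real normed space, let F ⊆ X be a nonempty closed bounded convex set, and let Ω ⊆ X be a nonempty closed convex set. Then the minimal time function T^F_Ω : X → [0, ∞] is a convex function, i.e., T^F_Ω(λx + (1 − λ)y) ≤ λ T^F_Ω(x) + (1 − λ) T^F_Ω(y) for all x, y ∈ X and λ ∈ [0, 1]. -/

import Mathlib

/-- The minimal time function `T^F_Ω(x) := inf{t ≥ 0 : Ω ∩ (x + tF) ≠ ∅}`,
with values in the extended reals (`sInf ∅ = ⊤`). -/
noncomputable def minTime {X : Type*} [AddCommGroup X] [Module ℝ X]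
    (F Ω : Set X) (x : X) : EReal :=
  sInf {r : EReal | ∃ t : ℝ, 0 ≤ t ∧ r = (t : EReal) ∧ ∃ f ∈ F, x + t • f ∈ Ω}

/-!
If `x + a • f ∈ Ω` and `y + b • g ∈ Ω` with `f, g ∈ F`, then by convexity of `Ω` the point
`t • x + (1 - t) • y` plus `t • a • f + (1 - t) • b • g` lies in `Ω`, and by convexity of `F` the
latter vector is `(t * a + (1 - t) * b) • h` for some `h ∈ F`. So convex combinations of feasible
times are feasible, and passing to infima gives convexity of `T^F_Ω`.
-/

namespace EReal

lemma le_coe_mul_add_coe_mul_of_forall_lt {u v w : EReal} (hu : u ≠ ⊥) (hv : v ≠ ⊥) {p q : ℝ}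
    (hp : 0 < p) (hq : 0 < q) (h : ∀ a b : ℝ, u < a → v < b → w ≤ ((p * a + q * b : ℝ) : EReal)) :
    w ≤ p * u + q * v := by
  induction u using EReal.rec <;> induction v using EReal.rec
  case coe.coe u v =>
    refine le_of_forall_lt_iff_le.1 fun z hz => ?_
    replace hz : p * u + q * v < z := by exact_mod_cast hz
    obtain ⟨δ, hδ, rfl⟩ : ∃ δ : ℝ, 0 < δ ∧ z = p * u + q * v + δ :=
      ⟨z - (p * u + q * v), _root_.sub_pos.2 hz, by ring⟩
    have hε : 0 < δ / (p + q) := by positivity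
    convert h (u + δ / (p + q)) (v + δ / (p + q)) (by exact_mod_cast lt_add_of_pos_right u hε)
      (by exact_mod_cast lt_add_of_pos_right v hε) using 2
    field_simp
    ring
  all_goals simp_all [coe_mul_top_of_pos, ← coe_mul]

end EReal

section MinTime

variable {X : Type*} [AddCommGroup X] [Module ℝ X] {F Ω : Set X} {x : X}

lemma minTime_le_of_add_smul_mem {τ : ℝ} (hτ : 0 ≤ τ) {f : X} (hf : f ∈ F)
    (h : x + τ • f ∈ Ω) : minTime F Ω x ≤ τ :=
  sInf_le ⟨τ, hτ, rfl, f, hf, h⟩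

lemma minTime_nonneg : 0 ≤ minTime F Ω x := by
  refine le_sInf ?_
  rintro _ ⟨τ, hτ, rfl, -⟩
  exact_mod_cast hτ

lemma minTime_ne_bot : minTime F Ω x ≠ ⊥ :=
  ne_bot_of_le_ne_bot EReal.zero_ne_bot minTime_nonneg

lemma exists_add_smul_mem_of_minTime_lt {c : EReal} (h : minTime F Ω x < c) :
    ∃ τ : ℝ, 0 ≤ τ ∧ (τ : EReal) < c ∧ ∃ f ∈ F, x + τ • f ∈ Ω := by
  obtain ⟨_, ⟨τ, hτ, rfl, hfeas⟩, hτc⟩ := sInf_lt_iff.1 h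
  exact ⟨τ, hτ, hτc, hfeas⟩

end MinTime

lemma Convex.exists_mem_combo_add_smul_mem {𝕜 E : Type*} [Field 𝕜] [LinearOrder 𝕜]
    [IsStrictOrderedRing 𝕜] [AddCommGroup E] [Module 𝕜 E] {F Ω : Set E}
    (hF : Convex 𝕜 F) (hΩ : Convex 𝕜 Ω) {x y f g : E} {a b t : 𝕜} (ha : 0 ≤ a) (hb : 0 ≤ b)
    (ht0 : 0 ≤ t) (ht1 : t ≤ 1) (hf : f ∈ F) (hg : g ∈ F)
    (hx : x + a • f ∈ Ω) (hy : y + b • g ∈ Ω) :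
    ∃ h ∈ F, (t • x + (1 - t) • y) + (t * a + (1 - t) * b) • h ∈ Ω := by
  have ht1' : 0 ≤ 1 - t := sub_nonneg.2 ht1
  obtain ⟨h, hh, hcomb⟩ :=
    hF.exists_mem_add_smul_eq hf hg (mul_nonneg ht0 ha) (mul_nonneg ht1' hb)
  refine ⟨h, hh, ?_⟩
  convert hΩ hx hy ht0 ht1' (add_sub_cancel t 1) using 1
  rw [hcomb]
  simp only [smul_add, smul_smul]
  abel

theorem stmt_19_general {X : Type*} [NormedAddCommGroup X] [NormedSpace ℝ X]
    (F Ω : Set X) (hFconv : Convex ℝ F) (hΩconv : Convex ℝ Ω) :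
    ∀ x y : X, ∀ t : ℝ, 0 ≤ t → t ≤ 1 →
      minTime F Ω (t • x + (1 - t) • y) ≤
        (t : EReal) * minTime F Ω x + ((1 - t : ℝ) : EReal) * minTime F Ω y := by
  intro x y t ht0 ht1
  rcases ht0.eq_or_lt with rfl | ht0
  · simp
  rcases ht1.eq_or_lt with rfl | ht1
  · simp
  refine EReal.le_coe_mul_add_coe_mul_of_forall_lt minTime_ne_bot minTime_ne_bot ht0
    (sub_pos.2 ht1) fun a b ha hb => ?_
  obtain ⟨a₀, ha₀, ha₀a, f, hf, hx⟩ := exists_add_smul_mem_of_minTime_lt ha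
  obtain ⟨b₀, hb₀, hb₀b, g, hg, hy⟩ := exists_add_smul_mem_of_minTime_lt hb
  obtain ⟨h, hh, hz⟩ :=
    hFconv.exists_mem_combo_add_smul_mem hΩconv ha₀ hb₀ ht0.le ht1.le hf hg hx hy
  calc minTime F Ω (t • x + (1 - t) • y)
      ≤ ((t * a₀ + (1 - t) * b₀ : ℝ) : EReal) :=
        minTime_le_of_add_smul_mem (by nlinarith) hh hz
    _ ≤ ((t * a + (1 - t) * b : ℝ) : EReal) := by
        have haa : a₀ ≤ a := by exact_mod_cast ha₀a.le
        have hbb : b₀ ≤ b := by exact_mod_cast hb₀b.le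
        have ht1' : 0 ≤ 1 - t := sub_nonneg.2 ht1.le
        gcongr

/-- Convexity of the minimal time function when the target set `Ω` is convex. -/
theorem stmt_19 {X : Type*} [NormedAddCommGroup X] [NormedSpace ℝ X]
    (F Ω : Set X) (hFne : F.Nonempty) (hFcl : IsClosed F)
    (hFbd : Bornology.IsBounded F) (hFconv : Convex ℝ F)
    (hΩne : Ω.Nonempty) (hΩcl : IsClosed Ω) (hΩconv : Convex ℝ Ω) :
    ∀ x y : X, ∀ t : ℝ, 0 ≤ t → t ≤ 1 →
      minTime F Ω (t • x + (1 - t) • y) ≤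
        (t : EReal) * minTime F Ω x + ((1 - t : ℝ) : EReal) * minTime F Ω y :=
  stmt_19_general F Ω hFconv hΩconv
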